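/- arXiv:2602.13281 — 2 statements merged into one kernel-verified Lean document; each statement's English description precedes it below -/
import Mathlib

section
/- Let M be an n×n nonnegative irreducible real matrix with ρ(M) = 1, and let f ∈ ℝⁿ be a nonnegative vector. Then the linear system (I − M) x = f has a nonnegative solution x ∈ ℝⁿ if and only if f = 0. -/
/-- A real square matrix is (entrywise) nonnegative. -/
def Matrix.IsNonneg {n : ℕ} (M : Matrix (Fin n) (Fin n) ℝ) : Prop :=
  ∀ i j, 0 ≤ M i j

/-- A nonnegative matrix is irreducible if for every pair of indices `(i, j)` there is a
positive power of the matrix whose `(i, j)` entry is positive. -/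
def Matrix.IsIrred {n : ℕ} (M : Matrix (Fin n) (Fin n) ℝ) : Prop :=
  ∀ i j, ∃ k : ℕ, 0 < k ∧ 0 < (M ^ k) i j

/-- The spectral radius of a real square matrix: the maximum of the absolute values of its
complex eigenvalues (the complex roots of its characteristic polynomial). -/
noncomputable def Matrix.specRad {n : ℕ} (M : Matrix (Fin n) (Fin n) ℝ) : ℝ :=
  sSup {r : ℝ | ∃ z : ℂ, (Polynomial.aeval z) M.charpoly = 0 ∧ r = ‖z‖}

/-!
If `x ≥ 0` solved `(I - M) x = f` with `f ≠ 0`, iterating `M x = x - f` would give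
`M ^ m x = x - ∑_{l < m} M ^ l f`, and irreducibility makes that sum entrywise positive for
large `m`; hence `x > 0` and `M ^ m x < x` entrywise. On the other hand, an eigenvector `v` for
an eigenvalue of modulus `ρ(M) = 1` satisfies `|v| ≤ M ^ m |v|` by the triangle inequality.
Comparing `|v|` with the least multiple of `x` above it shows that no nonzero vector can do both.
-/

open Polynomial Finset

namespace Matrix

section NonnegMatrix

variable {ι R : Type*} [Fintype ι]

theorem mulVec_apply_nonneg [Semiring R] [PartialOrder R] [IsOrderedRing R]
    {A : Matrix ι ι R} (hA : ∀ i j, 0 ≤ A i j) {v : ι → R} (hv : ∀ i, 0 ≤ v i) (i : ι) :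
    0 ≤ (A *ᵥ v) i :=
  sum_nonneg fun j _ => mul_nonneg (hA i j) (hv j)

theorem mulVec_apply_mono [Semiring R] [PartialOrder R] [IsOrderedRing R]
    {A : Matrix ι ι R} (hA : ∀ i j, 0 ≤ A i j) {u v : ι → R} (huv : ∀ i, u i ≤ v i) (i : ι) :
    (A *ᵥ u) i ≤ (A *ᵥ v) i :=
  sum_le_sum fun j _ => mul_le_mul_of_nonneg_left (huv j) (hA i j)

theorem eq_zero_of_le_mulVec_of_mulVec_lt [Field R] [LinearOrder R] [IsStrictOrderedRing R]
    {A : Matrix ι ι R} (hA : ∀ i j, 0 ≤ A i j) {x u : ι → R} (hx : ∀ i, 0 < x i)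
    (hAx : ∀ i, (A *ᵥ x) i < x i) (hu : ∀ i, 0 ≤ u i) (huA : ∀ i, u i ≤ (A *ᵥ u) i) :
    u = 0 := by
  by_contra hu0
  obtain ⟨k, hk⟩ := Function.ne_iff.1 hu0
  have : Nonempty ι := ⟨k⟩
  -- `t = u i₀ / x i₀` is the least `t` with `u ≤ t • x`
  obtain ⟨i₀, -, hi₀⟩ := exists_max_image univ (fun i => u i / x i) univ_nonempty
  set t := u i₀ / x i₀
  have hut : ∀ i, u i ≤ (t • x) i := fun i => (div_le_iff₀ (hx i)).1 (hi₀ i (mem_univ i))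
  have ht : 0 < t := (div_pos ((hu k).lt_of_ne' hk) (hx k)).trans_le (hi₀ k (mem_univ k))
  have : u i₀ < u i₀ := calc
    u i₀ ≤ (A *ᵥ u) i₀ := huA i₀
    _ ≤ (A *ᵥ (t • x)) i₀ := mulVec_apply_mono hA hut i₀
    _ = t * (A *ᵥ x) i₀ := by rw [mulVec_smul]; rfl
    _ < t * x i₀ := mul_lt_mul_of_pos_left (hAx i₀) ht
    _ = u i₀ := div_mul_cancel₀ _ (hx i₀).ne'
  exact this.false

theorem exists_sum_pow_mulVec_pos [DecidableEq ι] [Semiring R] [PartialOrder R]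
    [IsStrictOrderedRing R] {A : Matrix ι ι R} (hA : ∀ i j, 0 ≤ A i j) {f : ι → R} (hf : ∀ i, 0 ≤ f i) {j : ι} (hfj : 0 < f j) (hreach : ∀ i, ∃ k, 0 < (A ^ k) i j) :
    ∃ m, ∀ i, 0 < (∑ l ∈ range m, A ^ l *ᵥ f) i := by
  choose k hk using hreach
  refine ⟨univ.sup k + 1, fun i => ?_⟩
  rw [Finset.sum_apply]
  refine sum_pos' (fun l _ => mulVec_apply_nonneg (pow_apply_nonneg hA l) hf i)
    ⟨k i, mem_range.2 (Nat.lt_succ_of_le (le_sup (mem_univ i))), ?_⟩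
  exact (mul_pos (hk i) hfj).trans_le <| single_le_sum
    (fun l _ => mul_nonneg (pow_apply_nonneg hA _ i l) (hf l)) (mem_univ j)

theorem norm_le_mulVec_norm_of_mulVec_eq_smul {𝕜 : Type*} [RCLike 𝕜] {A : Matrix ι ι ℝ}
    (hA : ∀ i j, 0 ≤ A i j) {z : 𝕜} (hz : ‖z‖ = 1) {v : ι → 𝕜}
    (hv : A.map (algebraMap ℝ 𝕜) *ᵥ v = z • v) (i : ι) :
    ‖v i‖ ≤ (A *ᵥ fun j => ‖v j‖) i := calc
  ‖v i‖ = ‖(A.map (algebraMap ℝ 𝕜) *ᵥ v) i‖ := by rw [hv]; simp [hz]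
  _ ≤ ∑ j, ‖(A i j : 𝕜) * v j‖ := norm_sum_le _ _
  _ = (A *ᵥ fun j => ‖v j‖) i := by simp [mulVec, dotProduct, abs_of_nonneg (hA i _)]

end NonnegMatrix

section Powers

variable {ι R : Type*} [Fintype ι] [DecidableEq ι]

theorem pow_mulVec_eq_sub_sum [CommRing R] {A : Matrix ι ι R} {x f : ι → R}
    (h : A *ᵥ x = x - f) (k : ℕ) : A ^ k *ᵥ x = x - ∑ l ∈ range k, A ^ l *ᵥ f := by
  induction k with
  | zero => simp
  | succ k ih =>
    rw [pow_succ, ← mulVec_mulVec, h, mulVec_sub, ih, sum_range_succ]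
    abel

theorem pow_mulVec_eq_pow_smul [CommRing R] {A : Matrix ι ι R} {z : R} {v : ι → R}
    (h : A *ᵥ v = z • v) (k : ℕ) : A ^ k *ᵥ v = z ^ k • v := by
  induction k with
  | zero => simp
  | succ k ih => rw [pow_succ', ← mulVec_mulVec, ih, mulVec_smul, h, smul_smul, pow_succ]

theorem exists_mulVec_eq_smul_of_aeval_charpoly_eq_zero {K L : Type*} [CommRing K] [Field L]
    [Algebra K L] (A : Matrix ι ι K) {z : L} (hz : aeval z A.charpoly = 0) :
    ∃ v ≠ 0, A.map (algebraMap K L) *ᵥ v = z • v := by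
  have hdet : (scalar ι z - A.map (algebraMap K L)).det = 0 := by
    rwa [← eval_charpoly, charpoly_map, ← eval₂_eq_eval_map, ← aeval_def]
  obtain ⟨v, hv0, hv⟩ := exists_mulVec_eq_zero_iff.2 hdet
  refine ⟨v, hv0, ?_⟩
  rw [sub_mulVec, sub_eq_zero] at hv
  simpa using hv.symm

end Powers

theorem exists_aeval_charpoly_eq_zero_norm_eq_specRad {n : ℕ} [NeZero n]
    (M : Matrix (Fin n) (Fin n) ℝ) : ∃ z : ℂ, aeval z M.charpoly = 0 ∧ ‖z‖ = M.specRad := by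
  set S := {r : ℝ | ∃ z : ℂ, aeval z M.charpoly = 0 ∧ r = ‖z‖}
  have hfin : S.Finite := ((M.charpoly.rootSet_finite ℂ).image norm).subset <| by
    rintro r ⟨z, hz, rfl⟩
    exact ⟨z, mem_rootSet.2 ⟨M.charpoly_monic.ne_zero, hz⟩, rfl⟩
  have hne : S.Nonempty := by
    obtain ⟨z, hz⟩ := IsAlgClosed.exists_aeval_eq_zero ℂ M.charpoly
      (by simp [charpoly_degree_eq_dim, NeZero.ne n])
    exact ⟨‖z‖, z, hz, rfl⟩
  obtain ⟨z, hz, hρ⟩ := hne.csSup_mem hfin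
  exact ⟨z, hz, hρ.symm⟩

end Matrix

open Matrix

/-- If `M` is nonnegative, irreducible, with spectral radius `1`, and `f` is nonnegative, then
`(I - M) x = f` has a nonnegative solution if and only if `f = 0`. -/
theorem shifted_system_critical_case {n : ℕ}
    (M : Matrix (Fin n) (Fin n) ℝ) (hM : M.IsNonneg) (hirr : M.IsIrred)
    (hρ : M.specRad = 1) (f : Fin n → ℝ) (hf : ∀ i, 0 ≤ f i) :
    (∃ x : Fin n → ℝ, (∀ i, 0 ≤ x i) ∧ (1 - M).mulVec x = f) ↔ f = 0 := by
  refine ⟨fun ⟨x, hx, hxf⟩ => ?_, fun hf0 => ⟨0, fun _ => le_rfl, by simp [hf0]⟩⟩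
  by_contra hf0
  obtain ⟨j, hj⟩ := Function.ne_iff.1 hf0
  have : NeZero n := ⟨j.pos.ne'⟩
  obtain ⟨m, hw⟩ := exists_sum_pow_mulVec_pos hM hf ((hf j).lt_of_ne' hj)
    fun i => (hirr i j).imp fun _ => And.right
  have hMx : M ^ m *ᵥ x = x - ∑ l ∈ range m, M ^ l *ᵥ f :=
    pow_mulVec_eq_sub_sum (by rw [← hxf, sub_mulVec, one_mulVec, sub_sub_cancel]) m
  have hlt : ∀ i, (M ^ m *ᵥ x) i < x i := fun i => by simpa [hMx] using hw i
  have hxpos : ∀ i, 0 < x i := fun i =>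
    (mulVec_apply_nonneg (pow_apply_nonneg hM m) hx i).trans_lt (hlt i)
  obtain ⟨z, hz, hzρ⟩ := M.exists_aeval_charpoly_eq_zero_norm_eq_specRad
  obtain ⟨v, hv0, hv⟩ := exists_mulVec_eq_smul_of_aeval_charpoly_eq_zero M hz
  have hvm : (M ^ m).map (algebraMap ℝ ℂ) *ᵥ v = z ^ m • v := by
    rw [Matrix.map_pow, pow_mulVec_eq_pow_smul hv]
  have hnorm : (fun i => ‖v i‖) = 0 :=
    eq_zero_of_le_mulVec_of_mulVec_lt (pow_apply_nonneg hM m) hxpos hlt (fun i => norm_nonneg _)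
      (norm_le_mulVec_norm_of_mulVec_eq_smul (pow_apply_nonneg hM m) (by simp [hzρ, hρ]) hvm)
  exact hv0 (funext fun i => norm_eq_zero.1 (congrFun hnorm i))
end

section
/- Let M be an n×n nonnegative irreducible real matrix with Perron–Frobenius eigenvalue λ = ρ(M). Then the adjugate matrix adj(λ I − M) is entrywise strictly positive. In particular, each column of adj(λ I − M) is a nonzero vector in the kernel of λ I − M, i.e. an eigenvector of M for the eigenvalue λ. -/
/-!
Perron's theorem comes from the Collatz–Wielandt function `y ↦ minᵢ (A y)ᵢ / yᵢ`. Maximising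
it over the image of the standard simplex under a positive matrix `P` commuting with `A`
(here `P = (1 + M) ^ N`) yields `r` and a positive `x` with `A x = r x`, such that `t v ≤ A v`
for some `v ≥ 0`, `v ≠ 0` forces `t ≤ r`, with equality only if `A v = r v`. Applied to `|v|`
for a complex eigenvector `v`, this bounds every eigenvalue by `r`, so `r = ρ(M)`. As
`(1 + M) ^ N` is positive, a nonnegative eigenvector with a zero entry vanishes, so the
`r`-eigenspace is spanned by `x`.

Extending by zero an eigenvector of the principal submatrix `Mᵢᵢ` (row and column `i`
deleted), the same bound shows that the eigenvalues of `Mᵢᵢ` have modulus `< r`, so the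
diagonal entry `det (r I - Mᵢᵢ)` of `adj (r I - M)` is positive. Every column of
`adj (r I - M)` lies in `ker (r I - M)`, hence is a multiple of `x`, and its positive diagonal
entry makes that multiple positive.
-/

open Finset Polynomial

namespace Matrix

variable {ι : Type*} [Fintype ι]

section Nonneg

variable {A P : Matrix ι ι ℝ} {v : ι → ℝ}

lemma mulVec_nonneg (hA : ∀ i j, 0 ≤ A i j) (hv : 0 ≤ v) : 0 ≤ A *ᵥ v :=
  fun i => sum_nonneg fun j _ => mul_nonneg (hA i j) (hv j)

lemma mulVec_apply_pos (hP : ∀ i j, 0 < P i j) (hv : 0 ≤ v) (hv0 : v ≠ 0) (i : ι) :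
    0 < (P *ᵥ v) i := by
  obtain ⟨j, hj⟩ := (Pi.lt_def.1 (hv.lt_of_ne' hv0)).2
  exact sum_pos' (fun l _ => mul_nonneg (hP i l).le (hv l)) ⟨j, mem_univ j, mul_pos (hP i j) hj⟩

lemma mulVec_mulVec_sub_smul_of_commute (hPA : Commute P A) (t : ℝ) (v : ι → ℝ) :
    A *ᵥ (P *ᵥ v) - t • (P *ᵥ v) = P *ᵥ (A *ᵥ v - t • v) := by
  rw [mulVec_sub, mulVec_smul, mulVec_mulVec, mulVec_mulVec, hPA.eq]

lemma exists_pos_smul_mem_stdSimplex (hv : 0 ≤ v) (hv0 : v ≠ 0) :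
    ∃ c : ℝ, 0 < c ∧ c • v ∈ stdSimplex ℝ ι := by
  have hsum : 0 < ∑ i, v i := by
    obtain ⟨j, hj⟩ := (Pi.lt_def.1 (hv.lt_of_ne' hv0)).2
    exact sum_pos' (fun i _ => hv i) ⟨j, mem_univ j, hj⟩
  refine ⟨(∑ i, v i)⁻¹, inv_pos.2 hsum, fun i => mul_nonneg (inv_nonneg.2 hsum.le) (hv i),
    ?_⟩
  simp only [Pi.smul_apply, smul_eq_mul, ← mul_sum, inv_mul_cancel₀ hsum.ne']

variable [DecidableEq ι]

lemma pow_apply_le_one_add_pow_apply (hA : ∀ i j, 0 ≤ A i j) {k N : ℕ} (hkN : k ≤ N)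
    (i j : ι) :
    (A ^ k) i j ≤ ((1 + A) ^ N) i j := by
  rw [(Commute.one_left A).add_pow', sum_apply]
  have hterm : ∀ m ∈ antidiagonal N, 0 ≤ (N.choose m.1 • (1 ^ m.1 * A ^ m.2)) i j := by
    intro m _
    simpa only [one_pow, one_mul, smul_apply, nsmul_eq_mul] using
      mul_nonneg (Nat.cast_nonneg _) (pow_apply_nonneg hA _ i j)
  refine le_trans ?_ <|
    single_le_sum hterm (a := (N - k, k)) (mem_antidiagonal.2 (Nat.sub_add_cancel hkN))
  simp only [one_pow, one_mul, smul_apply, nsmul_eq_mul]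
  exact le_mul_of_one_le_left (pow_apply_nonneg hA _ i j)
    (Nat.one_le_cast.2 (Nat.choose_pos (Nat.sub_le N k)))

lemma exists_one_add_pow_pos (hA : ∀ i j, 0 ≤ A i j) (hirr : ∀ i j, ∃ k, 0 < (A ^ k) i j) :
    ∃ N : ℕ, ∀ i j, 0 < ((1 + A) ^ N) i j := by
  choose k hk using hirr
  refine ⟨univ.sup fun ij : ι × ι => k ij.1 ij.2, fun i j => ?_⟩
  exact (hk i j).trans_le <| pow_apply_le_one_add_pow_apply hA
    (le_sup (f := fun ij : ι × ι => k ij.1 ij.2) (mem_univ (i, j))) i j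

lemma pow_mulVec_of_mulVec_eq_smul {R : Type*} [CommSemiring R] {A : Matrix ι ι R} {v : ι → R}
    {r : R} (h : A *ᵥ v = r • v) (k : ℕ) : (A ^ k) *ᵥ v = r ^ k • v := by
  induction k with
  | zero => simp
  | succ k ih => rw [pow_succ, ← mulVec_mulVec, h, mulVec_smul, ih, smul_smul, pow_succ']

lemma eq_zero_of_mulVec_eq_smul_of_apply_eq_zero {N : ℕ} (hN : ∀ i j, 0 < ((1 + A) ^ N) i j)
    {r : ℝ} (hv : 0 ≤ v) (hAv : A *ᵥ v = r • v) {i : ι} (hvi : v i = 0) : v = 0 := by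
  by_contra hv0
  have h1 : (1 + A) *ᵥ v = (1 + r) • v := by
    rw [add_mulVec, one_mulVec, hAv, add_smul, one_smul]
  have h := mulVec_apply_pos hN hv hv0 i
  rw [pow_mulVec_of_mulVec_eq_smul h1, Pi.smul_apply, hvi, smul_zero] at h
  exact h.false

lemma exists_eq_smul_of_mulVec_eq_smul [Nonempty ι] {N : ℕ}
    (hN : ∀ i j, 0 < ((1 + A) ^ N) i j) {r : ℝ} {x u : ι → ℝ} (hx : ∀ i, 0 < x i)
    (hAx : A *ᵥ x = r • x) (hAu : A *ᵥ u = r • u) : ∃ c : ℝ, u = c • x := by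
  obtain ⟨i₀, -, hi₀⟩ := exists_mem_eq_inf' univ_nonempty fun i => u i / x i
  refine ⟨u i₀ / x i₀, sub_eq_zero.1 (eq_zero_of_mulVec_eq_smul_of_apply_eq_zero hN
    (r := r) (i := i₀) (fun i => ?_) ?_ ?_)⟩
  · have := hi₀ ▸ inf'_le (fun i => u i / x i) (mem_univ i)
    simpa [sub_nonneg, ← le_div_iff₀ (hx i)] using this
  · rw [mulVec_sub, mulVec_smul, hAx, hAu, smul_sub, smul_comm]
  · simp [div_mul_cancel₀ _ (hx i₀).ne']

end Nonneg

section CollatzWielandt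

variable [Nonempty ι] {A : Matrix ι ι ℝ} {y : ι → ℝ} {t : ℝ}

noncomputable def collatzWielandt (A : Matrix ι ι ℝ) (y : ι → ℝ) : ℝ :=
  univ.inf' univ_nonempty fun i => (A *ᵥ y) i / y i

lemma le_collatzWielandt_iff (hy : ∀ i, 0 < y i) :
    t ≤ collatzWielandt A y ↔ t • y ≤ A *ᵥ y := by
  simp only [collatzWielandt, le_inf'_iff, mem_univ, true_implies, le_div_iff₀ (hy _),
    Pi.le_def, Pi.smul_apply, smul_eq_mul]

lemma lt_collatzWielandt_iff (hy : ∀ i, 0 < y i) :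
    t < collatzWielandt A y ↔ ∀ i, t * y i < (A *ᵥ y) i := by
  simp only [collatzWielandt, lt_inf'_iff, mem_univ, true_implies, lt_div_iff₀ (hy _)]

lemma collatzWielandt_smul {c : ℝ} (hc : 0 < c) (y : ι → ℝ) :
    collatzWielandt A (c • y) = collatzWielandt A y := by
  simp only [collatzWielandt, mulVec_smul, Pi.smul_apply, smul_eq_mul,
    mul_div_mul_left _ _ hc.ne']

lemma continuousOn_collatzWielandt :
    ContinuousOn (collatzWielandt A) {y | ∀ i, 0 < y i} :=
  ContinuousOn.finset_inf'_apply univ_nonempty fun i _ =>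
    ((continuous_apply i).comp (continuous_const.matrix_mulVec continuous_id)).continuousOn.div
      (continuous_apply i).continuousOn fun _ hy => (hy i).ne'

end CollatzWielandt

def IsCollatzWielandtMax (A : Matrix ι ι ℝ) (r : ℝ) : Prop :=
  ∀ v : ι → ℝ, 0 ≤ v → v ≠ 0 → ∀ t : ℝ, t • v ≤ A *ᵥ v →
    t ≤ r ∧ (t = r → A *ᵥ v = r • v)

theorem exists_isCollatzWielandtMax [Nonempty ι] {A P : Matrix ι ι ℝ} (hP : ∀ i j, 0 < P i j)
    (hPA : Commute P A) :
    ∃ r : ℝ, IsCollatzWielandtMax A r ∧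
      ∃ x : ι → ℝ, (∀ i, 0 < x i) ∧ A *ᵥ x = r • x := by
  classical
  have hPv : ∀ v : ι → ℝ, 0 ≤ v → v ≠ 0 → ∀ i, 0 < (P *ᵥ v) i :=
    fun v hv hv0 => mulVec_apply_pos hP hv hv0
  have hS : ∀ u ∈ stdSimplex ℝ ι, ∀ i, 0 < (P *ᵥ u) i := fun u hu =>
    hPv u hu.1 fun h => by simpa [h] using hu.2
  obtain ⟨u₀, hu₀, hmax⟩ := (isCompact_stdSimplex ℝ ι).exists_isMaxOn
    ⟨_, single_mem_stdSimplex ℝ (Classical.arbitrary ι)⟩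
    (continuousOn_collatzWielandt.comp
      (continuous_const.matrix_mulVec continuous_id).continuousOn hS)
  obtain ⟨r, hr⟩ : ∃ r, collatzWielandt A (P *ᵥ u₀) = r := ⟨_, rfl⟩
  have hmax_r : IsCollatzWielandtMax A r := by
    intro v hv hv0 t ht
    obtain ⟨c, hc, hcv⟩ := exists_pos_smul_mem_stdSimplex hv hv0
    have hcw : collatzWielandt A (P *ᵥ (c • v)) ≤ collatzWielandt A (P *ᵥ u₀) := hmax hcv
    rw [mulVec_smul, collatzWielandt_smul hc, hr] at hcw
    have hdiff : 0 ≤ A *ᵥ v - t • v := sub_nonneg.2 ht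
    constructor
    · refine le_trans ((le_collatzWielandt_iff (hPv v hv hv0)).2 ?_) hcw
      rw [← sub_nonneg, mulVec_mulVec_sub_smul_of_commute hPA]
      exact mulVec_nonneg (fun i j => (hP i j).le) hdiff
    · rintro rfl
      by_contra hne
      -- `P` turns the nonzero defect `A v - t v ≥ 0` into a strictly positive one
      refine hcw.not_gt ((lt_collatzWielandt_iff (hPv v hv hv0)).2 fun i => sub_pos.1 ?_)
      have := mulVec_apply_pos hP hdiff (sub_ne_zero.2 hne) i
      rwa [← mulVec_mulVec_sub_smul_of_commute hPA] at this
  have hx := hS u₀ hu₀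
  refine ⟨r, hmax_r, P *ᵥ u₀, hx, (hmax_r _ (fun i => (hx i).le) ?_ r ?_).2 rfl⟩
  · exact fun h => (hx (Classical.arbitrary ι)).ne' (congrFun h _)
  · exact (le_collatzWielandt_iff hx).1 hr.ge

lemma aeval_charpoly_eq_zero_iff [DecidableEq ι] {R K : Type*} [CommRing R] [Field K]
    [Algebra R K] (A : Matrix ι ι R) (z : K) :
    aeval z A.charpoly = 0 ↔ ∃ v ≠ 0, A.map (algebraMap R K) *ᵥ v = z • v := by
  rw [aeval_def, eval₂_eq_eval_map, ← charpoly_map, eval_charpoly,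
    ← exists_mulVec_eq_zero_iff, scalar_apply, ← smul_one_eq_diagonal]
  simp only [sub_mulVec, smul_mulVec, one_mulVec, sub_eq_zero, eq_comm]

lemma norm_smul_le_mulVec_norm {A : Matrix ι ι ℝ} (hA : ∀ i j, 0 ≤ A i j) {z : ℂ}
    {v : ι → ℂ} (hv : A.map (algebraMap ℝ ℂ) *ᵥ v = z • v) :
    ‖z‖ • (fun i => ‖v i‖) ≤ A *ᵥ fun i => ‖v i‖ := by
  intro i
  calc ‖z‖ * ‖v i‖ = ‖∑ j, (A i j : ℂ) * v j‖ := by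
        rw [← norm_mul, ← smul_eq_mul, ← Pi.smul_apply, ← hv]; rfl
    _ ≤ ∑ j, A i j * ‖v j‖ := (norm_sum_le _ _).trans_eq <| sum_congr rfl fun j _ => by
        rw [norm_mul, Complex.norm_real, Real.norm_of_nonneg (hA i j)]

lemma det_smul_one_sub_pos [DecidableEq ι] {B : Matrix ι ι ℝ} {l : ℝ}
    (h : ∀ z : ℂ, aeval z B.charpoly = 0 → ‖z‖ < l) : 0 < (l • 1 - B).det := by
  rw [smul_one_eq_diagonal, ← scalar_apply, ← eval_charpoly]
  refine zero_lt_eval_of_roots_lt_of_leadingCoeff_nonneg (fun y hy => ?_)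
    (B.charpoly_monic.leadingCoeff ▸ zero_le_one)
  have := h (algebraMap ℝ ℂ y) <| by
    rw [aeval_algebraMap_apply_eq_algebraMap_eval, hy.eq_zero, map_zero]
  rw [Complex.coe_algebraMap, Complex.norm_real, Real.norm_eq_abs] at this
  exact (le_abs_self y).trans_lt this

lemma mulVec_col_adjugate_smul_one_sub [DecidableEq ι] {R : Type*} [CommRing R]
    (M : Matrix ι ι R) {l : R} (h : (l • 1 - M).det = 0) (j : ι) :
    M *ᵥ (fun i => (l • 1 - M).adjugate i j) = l • fun i => (l • 1 - M).adjugate i j := by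
  have hker : (l • 1 - M) *ᵥ ((l • 1 - M).adjugate *ᵥ Pi.single j 1) = 0 := by
    rw [mulVec_mulVec, mul_adjugate, h, zero_smul, zero_mulVec]
  rw [mulVec_single_one, sub_mulVec, smul_mulVec, one_mulVec, sub_eq_zero] at hker
  exact hker.symm

lemma specRad_eq_of_isCollatzWielandtMax {n : ℕ} {A : Matrix (Fin n) (Fin n) ℝ}
    (hA : ∀ i j, 0 ≤ A i j) {r : ℝ} (hr : IsCollatzWielandtMax A r) {x : Fin n → ℝ}
    (hx : 0 ≤ x) (hx0 : x ≠ 0) (hAx : A *ᵥ x = r • x) :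
    A.specRad = r := by
  have hr0 : 0 ≤ r := (hr x hx hx0 0 (by simpa using mulVec_nonneg hA hx)).1
  refine IsGreatest.csSup_eq ⟨⟨r, (aeval_charpoly_eq_zero_iff A (r : ℂ)).2
    ⟨algebraMap ℝ ℂ ∘ x, ?_, ?_⟩, by simp [abs_of_nonneg hr0]⟩, ?_⟩
  · exact fun h => hx0 (funext fun i => by simpa using congrFun h i)
  · ext i
    rw [← RingHom.map_mulVec, hAx]
    simp
  · rintro _ ⟨z, hz, rfl⟩
    obtain ⟨v, hv0, hv⟩ := (aeval_charpoly_eq_zero_iff A z).1 hz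
    refine (hr _ (fun i => norm_nonneg _) ?_ _ (norm_smul_le_mulVec_norm hA hv)).1
    exact fun h => hv0 (funext fun i => norm_eq_zero.1 (congrFun h i))

section PrincipalSubmatrix

variable {m : ℕ}

lemma mulVec_insertNth_zero_succAbove {R : Type*} [NonUnitalNonAssocSemiring R]
    (A : Matrix (Fin (m + 1)) (Fin (m + 1)) R) (i₀ : Fin (m + 1)) (u : Fin m → R) (j : Fin m) :
    (A *ᵥ i₀.insertNth 0 u) (i₀.succAbove j) =
      (A.submatrix i₀.succAbove i₀.succAbove *ᵥ u) j := by
  simp [mulVec, dotProduct, Fin.sum_univ_succAbove _ i₀]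

lemma adjugate_smul_one_sub_apply_self {R : Type*} [CommRing R]
    (A : Matrix (Fin (m + 1)) (Fin (m + 1)) R) (l : R) (i : Fin (m + 1)) :
    (l • 1 - A).adjugate i i = (l • 1 - A.submatrix i.succAbove i.succAbove).det := by
  rw [adjugate_fin_succ_eq_det_submatrix, Even.neg_one_pow ⟨i, rfl⟩, one_mul]
  congr 1
  ext a b
  simp [one_apply]

lemma norm_lt_of_aeval_submatrix_charpoly_eq_zero {A : Matrix (Fin (m + 1)) (Fin (m + 1)) ℝ}
    (hA : ∀ i j, 0 ≤ A i j) {N : ℕ} (hN : ∀ i j, 0 < ((1 + A) ^ N) i j) {r : ℝ}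
    (hr : IsCollatzWielandtMax A r) (i₀ : Fin (m + 1)) {z : ℂ}
    (hz : aeval z (A.submatrix i₀.succAbove i₀.succAbove).charpoly = 0) : ‖z‖ < r := by
  obtain ⟨v, hv0, hv⟩ := (aeval_charpoly_eq_zero_iff _ z).1 hz
  set w : Fin (m + 1) → ℝ := i₀.insertNth 0 fun j => ‖v j‖ with hw_def
  have hw : 0 ≤ w := Fin.le_insertNth_iff.2 ⟨le_rfl, fun j => norm_nonneg _⟩
  have hw0 : w ≠ 0 := fun h => hv0 <| funext fun j => norm_eq_zero.1 <| by
    simpa [hw_def] using congrFun h (i₀.succAbove j)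
  have hzw : ‖z‖ • w ≤ A *ᵥ w := by
    intro i
    cases i using Fin.succAboveCases i₀ with
    | x => simpa [hw_def] using mulVec_nonneg hA hw i₀
    | p j =>
      have := norm_smul_le_mulVec_norm (fun i j => hA _ _) hv j
      rw [hw_def, Pi.smul_apply, mulVec_insertNth_zero_succAbove, Fin.insertNth_apply_succAbove]
      exact this
  obtain ⟨hle, heq⟩ := hr w hw hw0 _ hzw
  refine hle.lt_of_ne fun h => hw0 ?_
  exact eq_zero_of_mulVec_eq_smul_of_apply_eq_zero hN hw (heq h) (Fin.insertNth_apply_same _ _ _)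

end PrincipalSubmatrix

end Matrix

open Matrix

/-- For a nonnegative irreducible matrix `M` with Perron–Frobenius eigenvalue `λ = ρ(M)`, the
adjugate of `λ I - M` is entrywise strictly positive; in particular each of its columns is a
nonzero eigenvector of `M` for the eigenvalue `λ`. -/
theorem adjugate_positive_eigenvectors {n : ℕ}
    (M : Matrix (Fin n) (Fin n) ℝ) (hM : M.IsNonneg) (hirr : M.IsIrred) :
    (∀ i j, 0 < (M.specRad • (1 : Matrix (Fin n) (Fin n) ℝ) - M).adjugate i j) ∧
    ∀ j : Fin n,
      (fun i => (M.specRad • (1 : Matrix (Fin n) (Fin n) ℝ) - M).adjugate i j) ≠ 0 ∧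
      M.mulVec (fun i => (M.specRad • (1 : Matrix (Fin n) (Fin n) ℝ) - M).adjugate i j)
        = M.specRad • fun i =>
            (M.specRad • (1 : Matrix (Fin n) (Fin n) ℝ) - M).adjugate i j := by
  rcases n with _ | m
  · exact ⟨fun i => i.elim0, fun j => j.elim0⟩
  obtain ⟨N, hN⟩ := exists_one_add_pow_pos hM fun i j => (hirr i j).imp fun _ => And.right
  obtain ⟨r, hr, x, hx, hMx⟩ :=
    exists_isCollatzWielandtMax hN (((Commute.one_left M).add_left (Commute.refl M)).pow_left N)
  have hx0 : x ≠ 0 := fun h => (hx 0).ne' (congrFun h 0)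
  rw [specRad_eq_of_isCollatzWielandtMax hM hr (fun i => (hx i).le) hx0 hMx]
  have hdet : (r • 1 - M).det = 0 := exists_mulVec_eq_zero_iff.1
    ⟨x, hx0, by rw [sub_mulVec, smul_mulVec, one_mulVec, hMx, sub_self]⟩
  have hcol := mulVec_col_adjugate_smul_one_sub M hdet
  have hdiag (i : Fin (m + 1)) : 0 < (r • 1 - M).adjugate i i := by
    rw [adjugate_smul_one_sub_apply_self]
    exact det_smul_one_sub_pos fun z hz =>
      norm_lt_of_aeval_submatrix_charpoly_eq_zero hM hN hr i hz
  have hpos (i j : Fin (m + 1)) : 0 < (r • 1 - M).adjugate i j := by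
    obtain ⟨c, hc⟩ := exists_eq_smul_of_mulVec_eq_smul hN hx hMx (hcol j)
    have hcj : (r • 1 - M).adjugate j j = c * x j := congrFun hc j
    have hc0 : 0 < c := (pos_iff_pos_of_mul_pos (hcj ▸ hdiag j)).2 (hx j)
    exact (congrFun hc i).trans_gt (mul_pos hc0 (hx i))
  exact ⟨hpos, fun j => ⟨fun h => (hpos j j).ne' (congrFun h j), hcol j⟩⟩
end
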